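/- Suppose a group $\Gamma$ with base point $o$ satisfies the counting bound $\#\{\gamma\in\Gamma : d(o,\gamma o)\le T\} \le C e^{\delta T}$ for all $T \ge 0$, where $0 < \delta < n/2$. Suppose for each pair $\gamma \ne \gamma'$ and each integer $j \ge 0$ we have reals $I_{\gamma,\gamma'}(t)$ with $|I_{\gamma,\gamma'}(t)| \le C_j t^{-j} e^{-\frac n2(d(o,\gamma o)+d(o,\gamma' o))}\min(e^{j d(o,\gamma o)}, e^{j d(o,\gamma' o)})$ for $t \ge 1$. Then, for any integer $j > n/2 - \delta$, the partial sum over pairs with $d(o,\gamma o) \le \log t$ and $d(o,\gamma' o) \le \log t$ satisfies $\sum |I_{\gamma,\gamma'}(t)| = \mathcal{O}(t^{2\delta - n})$ as $t \to \infty$. -/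
import Mathlib


noncomputable section

/-- Summation of the off-diagonal bounds: if the orbital counting function satisfies
`#{γ : d(o,γo) ≤ T} ≤ C e^{δT}` with `0 < δ < n/2`, and `|I_{γ,γ'}(t)| ≤
C_j t^{-j} e^{-n(Dγ+Dγ')/2} min(e^{jDγ}, e^{jDγ'})` for all `j` and `t ≥ 1`, then for
any integer `j > n/2 - δ`, the sum of `|I_{γ,γ'}(t)|` over distinct pairs with
`Dγ ≤ log t` and `Dγ' ≤ log t` is `O(t^{2δ-n})` as `t → ∞`. -/
theorem offdiagonal_sum_estimate {n : ℕ} {Γ : Type*} [Countable Γ]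
    (D : Γ → ℝ) (hD : ∀ γ, 0 ≤ D γ)
    (δ C : ℝ) (hδ0 : 0 < δ) (hδ : δ < n / 2) (hC : 0 < C)
    (hcount : ∀ T : ℝ, 0 ≤ T → {γ : Γ | D γ ≤ T}.Finite ∧
      (Nat.card {γ : Γ // D γ ≤ T} : ℝ) ≤ C * Real.exp (δ * T))
    (I : Γ → Γ → ℝ → ℝ) (Cj : ℕ → ℝ) (hCj : ∀ j, 0 < Cj j)
    (hI : ∀ j : ℕ, ∀ γ γ' : Γ, γ ≠ γ' → ∀ t : ℝ, 1 ≤ t →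
      |I γ γ' t| ≤ Cj j * t ^ (-(j : ℝ)) * Real.exp (-(n / 2 : ℝ) * (D γ + D γ')) *
        min (Real.exp ((j : ℝ) * D γ)) (Real.exp ((j : ℝ) * D γ')))
    (j : ℕ) (hj : (n : ℝ) / 2 - δ < j) :
    ∃ C' > 0, ∃ T₀ : ℝ, ∀ t : ℝ, T₀ ≤ t →
      (∑' q : {q : Γ × Γ // q.1 ≠ q.2 ∧ D q.1 ≤ Real.log t ∧ D q.2 ≤ Real.log t},
          |I q.1.1 q.1.2 t|)
        ≤ C' * t ^ (2 * δ - n) := by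
  refine ⟨C * C * Cj n, mul_pos (mul_pos hC hC) (hCj n), 1, fun t ht => ?_⟩
  have ht0 : (0:ℝ) < t := lt_of_lt_of_le one_pos ht
  have hL : 0 ≤ Real.log t := Real.log_nonneg ht
  obtain ⟨hfin, hcard⟩ := hcount (Real.log t) hL
  set L := Real.log t with hLdef
  -- pointwise bound with exponent n
  have key : ∀ γ γ' : Γ, γ ≠ γ' → |I γ γ' t| ≤ Cj n * t ^ (-(n:ℝ)) := by
    intro γ γ' hne
    refine (hI n γ γ' hne t ht).trans ?_
    have hb : Real.exp (-(n / 2 : ℝ) * (D γ + D γ')) *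
        min (Real.exp ((n : ℝ) * D γ)) (Real.exp ((n : ℝ) * D γ')) ≤ 1 := by
      rcases le_total (D γ) (D γ') with h' | h'
      · calc Real.exp (-(n / 2 : ℝ) * (D γ + D γ')) *
              min (Real.exp ((n : ℝ) * D γ)) (Real.exp ((n : ℝ) * D γ'))
            ≤ Real.exp (-(n / 2 : ℝ) * (D γ + D γ')) * Real.exp ((n : ℝ) * D γ) :=
              mul_le_mul_of_nonneg_left (min_le_left _ _) (Real.exp_nonneg _)
          _ = Real.exp (-(n / 2 : ℝ) * (D γ + D γ') + (n : ℝ) * D γ) :=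
              (Real.exp_add _ _).symm
          _ ≤ 1 := by
              rw [Real.exp_le_one_iff]
              nlinarith [Nat.cast_nonneg (α := ℝ) n]
      · calc Real.exp (-(n / 2 : ℝ) * (D γ + D γ')) *
              min (Real.exp ((n : ℝ) * D γ)) (Real.exp ((n : ℝ) * D γ'))
            ≤ Real.exp (-(n / 2 : ℝ) * (D γ + D γ')) * Real.exp ((n : ℝ) * D γ') :=
              mul_le_mul_of_nonneg_left (min_le_right _ _) (Real.exp_nonneg _)
          _ = Real.exp (-(n / 2 : ℝ) * (D γ + D γ') + (n : ℝ) * D γ') :=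
              (Real.exp_add _ _).symm
          _ ≤ 1 := by
              rw [Real.exp_le_one_iff]
              nlinarith [Nat.cast_nonneg (α := ℝ) n]
    have hpos : (0:ℝ) ≤ Cj n * t ^ (-(n:ℝ)) := mul_nonneg (hCj n).le (Real.rpow_nonneg ht0.le _)
    calc Cj n * t ^ (-(n:ℝ)) * Real.exp (-(n / 2 : ℝ) * (D γ + D γ')) *
          min (Real.exp ((n : ℝ) * D γ)) (Real.exp ((n : ℝ) * D γ'))
        = (Cj n * t ^ (-(n:ℝ))) * (Real.exp (-(n / 2 : ℝ) * (D γ + D γ')) *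
            min (Real.exp ((n : ℝ) * D γ)) (Real.exp ((n : ℝ) * D γ'))) := by ring
      _ ≤ (Cj n * t ^ (-(n:ℝ))) * 1 := mul_le_mul_of_nonneg_left hb hpos
      _ = Cj n * t ^ (-(n:ℝ)) := mul_one _
  -- the index set is finite
  set F : Set (Γ × Γ) := {q | q.1 ≠ q.2 ∧ D q.1 ≤ L ∧ D q.2 ≤ L} with hFdef
  have hFsub : F ⊆ {γ : Γ | D γ ≤ L} ×ˢ {γ : Γ | D γ ≤ L} := by
    rintro ⟨a, b⟩ ⟨_, h1, h2⟩
    exact ⟨h1, h2⟩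
  have hFfin : F.Finite := (hfin.prod hfin).subset hFsub
  haveI : Finite {γ : Γ // D γ ≤ L} := hfin.to_subtype
  haveI : Fintype ↥F := hFfin.fintype
  -- card bound
  have hinj : Function.Injective (fun q : ↥F =>
      ((⟨q.1.1, q.2.2.1⟩, ⟨q.1.2, q.2.2.2⟩) :
        {γ : Γ // D γ ≤ L} × {γ : Γ // D γ ≤ L})) := by
    rintro ⟨⟨a, b⟩, h⟩ ⟨⟨a', b'⟩, h'⟩ heq
    simp only [Prod.mk.injEq, Subtype.mk.injEq] at heq
    simp [heq.1, heq.2]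
  have hcardF : (Nat.card ↥F : ℝ) ≤ (C * Real.exp (δ * L)) ^ 2 := by
    have h1 : Nat.card ↥F ≤ Nat.card ({γ : Γ // D γ ≤ L} × {γ : Γ // D γ ≤ L}) :=
      Nat.card_le_card_of_injective _ hinj
    have h2 : Nat.card ({γ : Γ // D γ ≤ L} × {γ : Γ // D γ ≤ L})
        = Nat.card {γ : Γ // D γ ≤ L} * Nat.card {γ : Γ // D γ ≤ L} := Nat.card_prod _ _
    have h3 : (Nat.card ↥F : ℝ) ≤ (Nat.card {γ : Γ // D γ ≤ L} : ℝ)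
        * (Nat.card {γ : Γ // D γ ≤ L} : ℝ) := by
      rw [← Nat.cast_mul, ← h2]; exact_mod_cast h1
    calc (Nat.card ↥F : ℝ) ≤ _ := h3
      _ ≤ (C * Real.exp (δ * L)) * (C * Real.exp (δ * L)) := by
          apply mul_le_mul hcard hcard (Nat.cast_nonneg _)
          positivity
      _ = (C * Real.exp (δ * L)) ^ 2 := (sq _).symm
  -- compute the tsum as a finite sum
  have htsum : (∑' q : ↥F, |I q.1.1 q.1.2 t|) = ∑ q : ↥F, |I q.1.1 q.1.2 t| :=
    tsum_fintype _
  have hexp : Real.exp (δ * L) = t ^ δ := by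
    rw [Real.rpow_def_of_pos ht0, mul_comm]
  calc (∑' q : ↥F, |I q.1.1 q.1.2 t|)
      = ∑ q : ↥F, |I q.1.1 q.1.2 t| := htsum
    _ ≤ Finset.univ.card • (Cj n * t ^ (-(n:ℝ))) :=
        Finset.sum_le_card_nsmul _ _ _ (fun q _ => key q.1.1 q.1.2 q.2.1)
    _ = (Nat.card ↥F : ℝ) * (Cj n * t ^ (-(n:ℝ))) := by
        rw [nsmul_eq_mul, Finset.card_univ, Nat.card_eq_fintype_card]
    _ ≤ (C * Real.exp (δ * L)) ^ 2 * (Cj n * t ^ (-(n:ℝ))) := by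
        apply mul_le_mul_of_nonneg_right hcardF
        exact mul_nonneg (hCj n).le (Real.rpow_nonneg ht0.le _)
    _ = C * C * Cj n * (t ^ δ * t ^ δ * t ^ (-(n:ℝ))) := by
        rw [hexp]; ring
    _ = C * C * Cj n * t ^ (2 * δ - n) := by
        rw [← Real.rpow_add ht0, ← Real.rpow_add ht0]
        have he : δ + δ + -(n:ℝ) = 2 * δ - n := by ring
        rw [he]
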